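/- arXiv:1511.01039 — 4 statements merged into one kernel-verified Lean document; each statement's English description precedes it below -/
import Mathlib

section
/- Let K ⊂ ℝᵐ be a convex set and let u : Ω → ℝᵐ be a function on an open connected set Ω ⊂ ℝⁿ each of whose components is harmonic, with u(x) ∈ closure(K) for all x in Ω. If u(x₀) ∈ frontier(K) for some x₀ ∈ Ω, then u(x) ∈ frontier(K) for all x ∈ Ω. -/
noncomputable def laplacian {n : ℕ} (f : (Fin n → ℝ) → ℝ) (x : Fin n → ℝ) : ℝ :=
  ∑ i, fderiv ℝ (fun y => fderiv ℝ f y (Pi.single i 1)) x (Pi.single i 1)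

def HarmonicOn {n : ℕ} (f : (Fin n → ℝ) → ℝ) (Ω : Set (Fin n → ℝ)) : Prop :=
  ContDiffOn ℝ 2 f Ω ∧ ∀ x ∈ Ω, laplacian f x = 0

/-!
Separate `u x₀` from the open convex set `interior K` by a continuous functional `ℓ`. Then
`-ℓ ∘ u` is harmonic on `Ω` and attains its minimum at `x₀`, so by the strong minimum principle
`ℓ ∘ u` is constant on the connected set `Ω`, which keeps `u` out of `interior K`.

The strong minimum principle is proved after E. Hopf. If the minimum set of a superharmonic `f`
were not open, a point `p` of it nearest to a point `z` where `f` is larger would lie on the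
boundary of a ball on which `f > f p`. Comparing `f` with the barrier `exp (-α |x - z|²)` on an
annulus (weak minimum principle for strictly superharmonic functions) shows that the derivative of
`f` at `p` in the direction `z - p` is positive, whereas it vanishes at an interior minimum.
-/

open Set Filter Topology

section SecondDerivative

variable {E : Type*} [NormedAddCommGroup E] [NormedSpace ℝ E] {f g : E → ℝ} {x : E}

theorem ContDiffAt.eventually_differentiableAt (hf : ContDiffAt ℝ 2 f x) :
    ∀ᶠ y in 𝓝 x, DifferentiableAt ℝ f y :=
  (hf.eventually (by simp)).mono fun _ hy => hy.differentiableAt (by norm_num)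

theorem ContDiffAt.differentiableAt_fderiv_apply (hf : ContDiffAt ℝ 2 f x) (v : E) :
    DifferentiableAt ℝ (fun y => fderiv ℝ f y v) x :=
  ((hf.fderiv_right (m := 1) (by norm_num)).differentiableAt (by norm_num)).clm_apply
    (differentiableAt_const v)

theorem fderiv_fderiv_apply_add (hf : ContDiffAt ℝ 2 f x) (hg : ContDiffAt ℝ 2 g x) (v w : E) :
    fderiv ℝ (fun y => fderiv ℝ (fun y => f y + g y) y v) x w =
      fderiv ℝ (fun y => fderiv ℝ f y v) x w + fderiv ℝ (fun y => fderiv ℝ g y v) x w := by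
  have hloc : (fun y => fderiv ℝ (fun y => f y + g y) y v) =ᶠ[𝓝 x]
      fun y => fderiv ℝ f y v + fderiv ℝ g y v := by
    filter_upwards [hf.eventually_differentiableAt, hg.eventually_differentiableAt] with y hfy hgy
    rw [fderiv_fun_add hfy hgy, add_apply]
  rw [hloc.fderiv_eq, fderiv_fun_add (hf.differentiableAt_fderiv_apply v)
    (hg.differentiableAt_fderiv_apply v), add_apply]

theorem fderiv_fderiv_apply_const_mul (hf : ContDiffAt ℝ 2 f x) (a : ℝ) (v w : E) :
    fderiv ℝ (fun y => fderiv ℝ (fun y => a * f y) y v) x w =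
      a * fderiv ℝ (fun y => fderiv ℝ f y v) x w := by
  have hloc : (fun y => fderiv ℝ (fun y => a * f y) y v) =ᶠ[𝓝 x]
      fun y => a * fderiv ℝ f y v := by
    filter_upwards [hf.eventually_differentiableAt] with y hfy
    rw [fderiv_const_mul hfy, smul_apply, smul_eq_mul]
  rw [hloc.fderiv_eq, fderiv_const_mul (hf.differentiableAt_fderiv_apply v),
    smul_apply, smul_eq_mul]

theorem nonneg_of_isLocalMin_of_hasDerivAt {φ φ' : ℝ → ℝ} {a c : ℝ} (hmin : IsLocalMin φ a)
    (hφ : ∀ᶠ t in 𝓝 a, HasDerivAt φ (φ' t) t) (hφ' : HasDerivAt φ' c a) : 0 ≤ c := by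
  by_contra! hc
  have hφ'a : φ' a = 0 := hmin.hasDerivAt_eq_zero hφ.self_of_nhds
  have hneg : ∀ᶠ t in 𝓝[>] a, φ' t < 0 := by
    have hslope := (hasDerivAt_iff_tendsto_slope.mp hφ').mono_left (nhdsGT_le_nhdsNE a)
    filter_upwards [hslope.eventually (gt_mem_nhds hc), self_mem_nhdsWithin] with t ht hat
    rwa [slope_def_field, hφ'a, sub_zero, div_lt_iff₀ (sub_pos.2 hat), zero_mul] at ht
  obtain ⟨b, hab, hsub⟩ : ∃ b > a, Ioc a b ⊆
      {t | φ' t < 0 ∧ HasDerivAt φ (φ' t) t ∧ φ a ≤ φ t} :=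
    mem_nhdsGT_iff_exists_Ioc_subset.mp (hneg.and (nhdsWithin_le_nhds (hφ.and hmin)))
  have hcont : ContinuousOn φ (Icc a b) := by
    intro t ht
    rcases eq_or_lt_of_le ht.1 with rfl | hat
    · exact hφ.self_of_nhds.continuousAt.continuousWithinAt
    · exact (hsub ⟨hat, ht.2⟩).2.1.continuousAt.continuousWithinAt
  obtain ⟨ξ, hξ, hslope⟩ := exists_hasDerivAt_eq_slope φ φ' hab hcont
    (fun t ht => (hsub (Ioo_subset_Ioc_self ht)).2.1)
  have hdrop : φ b - φ a < 0 := by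
    have := (hsub (Ioo_subset_Ioc_self hξ)).1
    rwa [hslope, div_lt_iff₀ (sub_pos.2 hab), zero_mul] at this
  linarith [(hsub ⟨hab, le_rfl⟩).2.2]

theorem IsLocalMin.fderiv_fderiv_apply_self_nonneg (hmin : IsLocalMin f x)
    (hf : ContDiffAt ℝ 2 f x) (v : E) : 0 ≤ fderiv ℝ (fun y => fderiv ℝ f y v) x v := by
  have hline (t : ℝ) : HasDerivAt (fun s : ℝ => x + s • v) v t := by
    simpa using ((hasDerivAt_id t).smul_const v).const_add x
  have htends : Tendsto (fun t : ℝ => x + t • v) (𝓝 0) (𝓝 x) := by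
    simpa using (hline 0).continuousAt.tendsto
  refine nonneg_of_isLocalMin_of_hasDerivAt (φ := fun t => f (x + t • v))
    (φ' := fun t => fderiv ℝ f (x + t • v) v) (a := 0) ?_ ?_
    ((hf.differentiableAt_fderiv_apply v).hasFDerivAt.hasLineDerivAt v)
  · simpa [IsLocalMin, IsMinFilter] using htends.eventually hmin
  · filter_upwards [htends.eventually hf.eventually_differentiableAt] with t ht
    exact ht.hasFDerivAt.comp_hasDerivAt t (hline t)

end SecondDerivative

section Laplacian

variable {n : ℕ} {f g : (Fin n → ℝ) → ℝ} {x : Fin n → ℝ} {Ω : Set (Fin n → ℝ)}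

theorem laplacian_add (hf : ContDiffAt ℝ 2 f x) (hg : ContDiffAt ℝ 2 g x) :
    laplacian (fun y => f y + g y) x = laplacian f x + laplacian g x := by
  simp only [laplacian, fderiv_fderiv_apply_add hf hg, Finset.sum_add_distrib]

theorem laplacian_const_mul (hf : ContDiffAt ℝ 2 f x) (a : ℝ) :
    laplacian (fun y => a * f y) x = a * laplacian f x := by
  simp only [laplacian, fderiv_fderiv_apply_const_mul hf, Finset.mul_sum]

theorem laplacian_sub (hf : ContDiffAt ℝ 2 f x) (hg : ContDiffAt ℝ 2 g x) :
    laplacian (fun y => f y - g y) x = laplacian f x - laplacian g x := by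
  have h : (fun y => f y - g y) = fun y => f y + -1 * g y := by
    funext y
    ring
  rw [h, laplacian_add hf (contDiffAt_const.mul hg), laplacian_const_mul hg]
  ring

theorem laplacian_const (c : ℝ) : laplacian (fun _ : Fin n → ℝ => c) x = 0 := by
  simp [laplacian]

theorem IsLocalMin.laplacian_nonneg (hmin : IsLocalMin f x) (hf : ContDiffAt ℝ 2 f x) :
    0 ≤ laplacian f x :=
  Finset.sum_nonneg fun _ _ => hmin.fderiv_fderiv_apply_self_nonneg hf _

theorem HarmonicOn.contDiffAt (hf : HarmonicOn f Ω) (hΩ : IsOpen Ω) (hx : x ∈ Ω) :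
    ContDiffAt ℝ 2 f x :=
  hf.1.contDiffAt (hΩ.mem_nhds hx)

theorem HarmonicOn.add (hf : HarmonicOn f Ω) (hg : HarmonicOn g Ω) (hΩ : IsOpen Ω) :
    HarmonicOn (fun y => f y + g y) Ω :=
  ⟨hf.1.add hg.1, fun x hx => by
    rw [laplacian_add (hf.contDiffAt hΩ hx) (hg.contDiffAt hΩ hx), hf.2 x hx, hg.2 x hx,
      add_zero]⟩

theorem HarmonicOn.const_mul (hf : HarmonicOn f Ω) (hΩ : IsOpen Ω) (a : ℝ) :
    HarmonicOn (fun y => a * f y) Ω :=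
  ⟨contDiffOn_const.mul hf.1, fun x hx => by
    rw [laplacian_const_mul (hf.contDiffAt hΩ hx), hf.2 x hx, mul_zero]⟩

theorem harmonicOn_const (c : ℝ) : HarmonicOn (fun _ : Fin n → ℝ => c) Ω :=
  ⟨contDiffOn_const, fun _ _ => laplacian_const c⟩

theorem HarmonicOn.sum {ι : Type*} (s : Finset ι) {g : ι → (Fin n → ℝ) → ℝ}
    (hg : ∀ j ∈ s, HarmonicOn (g j) Ω) (hΩ : IsOpen Ω) :
    HarmonicOn (fun y => ∑ j ∈ s, g j y) Ω := by
  classical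
  induction s using Finset.induction_on with
  | empty => simpa using harmonicOn_const 0
  | insert j s hj ih =>
    simp only [Finset.sum_insert hj]
    exact (hg j (s.mem_insert_self j)).add
      (ih fun k hk => hg k (Finset.mem_insert_of_mem hk)) hΩ

theorem HarmonicOn.clm_comp {m : ℕ} {u : (Fin n → ℝ) → Fin m → ℝ}
    (hu : ∀ j, HarmonicOn (fun y => u y j) Ω) (hΩ : IsOpen Ω)
    (ℓ : (Fin m → ℝ) →L[ℝ] ℝ) : HarmonicOn (fun y => ℓ (u y)) Ω := by
  have h : (fun y => ℓ (u y)) = fun y => ∑ j, ℓ (Pi.single j 1) * u y j := by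
    funext y
    conv_lhs => rw [← Finset.univ_sum_single (u y)]
    simp only [map_sum]
    congr 1 with j
    rw [mul_comm, ← smul_eq_mul, ← map_smul, ← Pi.single_smul, smul_eq_mul, mul_one]
  rw [h]
  exact HarmonicOn.sum _ (fun j _ => (hu j).const_mul hΩ _) hΩ

end Laplacian

section SqDist

variable {n : ℕ}

/-- `|x - z|²` for the Euclidean norm, which is not the (sup) norm of `Fin n → ℝ`. -/
def sqDist (z x : Fin n → ℝ) : ℝ := ∑ i, (x i - z i) ^ 2

theorem sqDist_nonneg (z x : Fin n → ℝ) : 0 ≤ sqDist z x :=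
  Finset.sum_nonneg fun _ _ => sq_nonneg _

theorem sqDist_comm (z x : Fin n → ℝ) : sqDist z x = sqDist x z := by
  simp only [sqDist, ← neg_sub (z _), neg_sq]

theorem sqDist_pos_of_ne {z x : Fin n → ℝ} (h : x ≠ z) : 0 < sqDist z x := by
  obtain ⟨i, hi⟩ := Function.ne_iff.1 h
  exact lt_of_lt_of_le (pow_pos (abs_pos.2 (sub_ne_zero.2 hi)) 2 |>.trans_eq (sq_abs _))
    (Finset.single_le_sum (fun j _ => sq_nonneg (x j - z j)) (Finset.mem_univ i))

theorem sqDist_le_two_mul_add (a b c : Fin n → ℝ) :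
    sqDist a c ≤ 2 * sqDist a b + 2 * sqDist b c := by
  simp only [sqDist, Finset.mul_sum, ← Finset.sum_add_distrib]
  exact Finset.sum_le_sum fun i _ => by nlinarith [sq_nonneg (c i + a i - 2 * b i)]

theorem sqDist_add_smul_sub (z p : Fin n → ℝ) (t : ℝ) :
    sqDist z (p + t • (z - p)) = (1 - t) ^ 2 * sqDist z p := by
  simp only [sqDist, Finset.mul_sum, Pi.add_apply, Pi.smul_apply, Pi.sub_apply, smul_eq_mul]
  exact Finset.sum_congr rfl fun i _ => by ring

theorem continuous_sqDist (z : Fin n → ℝ) : Continuous (sqDist z) := by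
  unfold sqDist
  fun_prop

theorem dist_le_sqrt_sqDist (z x : Fin n → ℝ) : dist x z ≤ √(sqDist z x) :=
  (dist_pi_le_iff (Real.sqrt_nonneg _)).2 fun i => by
    rw [Real.dist_eq]
    exact Real.abs_le_sqrt
      (Finset.single_le_sum (fun j _ => sq_nonneg (x j - z j)) (Finset.mem_univ i))

theorem isCompact_sqDist_le (z : Fin n → ℝ) (s : ℝ) : IsCompact {x | sqDist z x ≤ s} :=
  (isCompact_closedBall z √s).of_isClosed_subset
    (isClosed_le (continuous_sqDist z) continuous_const)
    fun x hx => (dist_le_sqrt_sqDist z x).trans (Real.sqrt_le_sqrt hx)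

theorem IsOpen.exists_sqDist_lt_subset {Ω : Set (Fin n → ℝ)} (hΩ : IsOpen Ω) {x : Fin n → ℝ}
    (hx : x ∈ Ω) : ∃ R > 0, {y | sqDist x y < R} ⊆ Ω := by
  obtain ⟨r, hr, hball⟩ := Metric.isOpen_iff.1 hΩ x hx
  exact ⟨r ^ 2, by positivity, fun y hy =>
    hball ((dist_le_sqrt_sqDist x y).trans_lt ((Real.sqrt_lt' hr).2 hy))⟩

theorem hasFDerivAt_sqDist (z x : Fin n → ℝ) :
    HasFDerivAt (sqDist z)
      (∑ i, (2 * (x i - z i)) • (ContinuousLinearMap.proj i : (Fin n → ℝ) →L[ℝ] ℝ)) x := by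
  unfold sqDist
  refine HasFDerivAt.fun_sum fun i _ => ?_
  refine (((hasFDerivAt_apply (𝕜 := ℝ) i x).sub_const (z i)).pow 2).congr_fderiv ?_
  ext v
  simp

theorem fderiv_sqDist_apply_sub (z x : Fin n → ℝ) :
    fderiv ℝ (sqDist z) x (z - x) = -2 * sqDist z x := by
  simp only [(hasFDerivAt_sqDist z x).fderiv, sqDist, Finset.mul_sum, FunLike.coe_sum,
    Finset.sum_apply, FunLike.coe_smul, Pi.smul_apply, ContinuousLinearMap.proj_apply,
    Pi.sub_apply, smul_eq_mul]
  exact Finset.sum_congr rfl fun i _ => by ring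

theorem laplacian_comp_sqDist {φ φ' φ'' : ℝ → ℝ} (hφ : ∀ s, HasDerivAt φ (φ' s) s)
    (hφ' : ∀ s, HasDerivAt φ' (φ'' s) s) (z x : Fin n → ℝ) :
    laplacian (fun y => φ (sqDist z y)) x =
      4 * sqDist z x * φ'' (sqDist z x) + 2 * n * φ' (sqDist z x) := by
  have hpartial (i : Fin n) : (fun y => fderiv ℝ (fun y => φ (sqDist z y)) y (Pi.single i 1)) =
      fun y => φ' (sqDist z y) * (2 * (y i - z i)) := by
    funext y
    have h : HasFDerivAt (fun y => φ (sqDist z y)) _ y :=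
      (hφ _).comp_hasFDerivAt y (hasFDerivAt_sqDist z y)
    rw [h.fderiv]
    simp [Pi.single_apply]
  have hsecond (i : Fin n) : fderiv ℝ (fun y => φ' (sqDist z y) * (2 * (y i - z i))) x
      (Pi.single i 1) = φ'' (sqDist z x) * (2 * (x i - z i)) ^ 2 + 2 * φ' (sqDist z x) := by
    have h : HasFDerivAt (fun y => φ' (sqDist z y) * (2 * (y i - z i))) _ x :=
      ((hφ' _).comp_hasFDerivAt x (hasFDerivAt_sqDist z x)).mul
        (((hasFDerivAt_apply (𝕜 := ℝ) i x).sub_const (z i)).const_mul 2)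
    rw [h.fderiv]
    simp only [Function.comp_apply, add_apply, smul_apply, ContinuousLinearMap.proj_apply,
      Pi.single_eq_same, smul_eq_mul, mul_one, sum_apply, Pi.single_apply, mul_ite, mul_zero,
      Finset.sum_ite_eq', Finset.mem_univ, ↓reduceIte]
    ring
  have hsum : ∑ i, (2 * (x i - z i)) ^ 2 = 4 * sqDist z x := by
    simp only [sqDist, mul_pow, Finset.mul_sum]
    norm_num
  simp only [laplacian, hpartial, hsecond, Finset.sum_add_distrib, ← Finset.mul_sum, hsum,
    Finset.sum_const, Finset.card_univ, Fintype.card_fin, nsmul_eq_mul]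
  ring

theorem hasDerivAt_exp_neg_mul (α s : ℝ) :
    HasDerivAt (fun s => Real.exp (-α * s)) (-α * Real.exp (-α * s)) s := by
  simpa [mul_comm] using ((hasDerivAt_id s).const_mul (-α)).exp

theorem laplacian_exp_neg_mul_sqDist (α : ℝ) (z x : Fin n → ℝ) :
    laplacian (fun y => Real.exp (-α * sqDist z y)) x =
      Real.exp (-α * sqDist z x) * (4 * α ^ 2 * sqDist z x - 2 * α * n) := by
  have h' (s : ℝ) : HasDerivAt (fun s => -α * Real.exp (-α * s))
      (α ^ 2 * Real.exp (-α * s)) s := by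
    simpa [pow_two, mul_assoc] using (hasDerivAt_exp_neg_mul α s).const_mul (-α)
  rw [laplacian_comp_sqDist (hasDerivAt_exp_neg_mul α) h']
  ring

theorem laplacian_exp_neg_mul_sqDist_pos {α : ℝ} (hα : 0 < α) {z x : Fin n → ℝ}
    (hx : n < 2 * α * sqDist z x) : 0 < laplacian (fun y => Real.exp (-α * sqDist z y)) x := by
  rw [laplacian_exp_neg_mul_sqDist]
  exact mul_pos (Real.exp_pos _) (by nlinarith)

end SqDist

theorem IsCompact.exists_pos_add_le {X : Type*} [TopologicalSpace X] {S : Set X}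
    (hS : IsCompact S) {f : X → ℝ} (hf : ContinuousOn f S) {a : ℝ} (h : ∀ x ∈ S, a < f x) :
    ∃ ε > 0, ∀ x ∈ S, a + ε ≤ f x := by
  rcases S.eq_empty_or_nonempty with rfl | hne
  · exact ⟨1, one_pos, by simp⟩
  obtain ⟨q, hq, hmin⟩ := hS.exists_isMinOn hne hf
  exact ⟨f q - a, sub_pos.2 (h q hq), fun x hx => by linarith [isMinOn_iff.1 hmin x hx]⟩

section MinimumPrinciple

variable {n : ℕ} {Ω : Set (Fin n → ℝ)} {f g : (Fin n → ℝ) → ℝ}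

theorem IsCompact.le_of_laplacian_neg {A : Set (Fin n → ℝ)} (hA : IsCompact A)
    (hg : ContinuousOn g A) (hg₂ : ∀ x ∈ interior A, ContDiffAt ℝ 2 g x)
    (hΔ : ∀ x ∈ interior A, laplacian g x < 0) {m : ℝ} (hfr : ∀ x ∈ frontier A, m ≤ g x) :
    ∀ x ∈ A, m ≤ g x := by
  intro x hx
  obtain ⟨q, hqA, hqmin⟩ := hA.exists_isMinOn ⟨x, hx⟩ hg
  refine (?_ : m ≤ g q).trans (hqmin hx)
  by_cases hq : q ∈ interior A
  · have := (hqmin.isLocalMin (mem_interior_iff_mem_nhds.1 hq)).laplacian_nonneg (hg₂ q hq)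
    exact absurd (hΔ q hq) this.not_gt
  · exact hfr q ⟨subset_closure hqA, hq⟩

/-- `hαp` makes the barrier `exp (-α |x - z|²)` strictly subharmonic on the annulus
`|p - z|² / 4 ≤ |x - z|² ≤ |p - z|²`, so that `f - ε • barrier` obeys the weak minimum principle
there; `ε` is chosen so that it does not drop below `f p` on the inner sphere. -/
theorem exists_barrier_comparison {z p : Fin n → ℝ} (hΩ : IsOpen Ω) (hf : ContDiffOn ℝ 2 f Ω)
    (hΔ : ∀ x ∈ Ω, laplacian f x ≤ 0) (hball : {x | sqDist z x ≤ sqDist z p} ⊆ Ω)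
    (hle : ∀ x, sqDist z x ≤ sqDist z p → f p ≤ f x)
    (hlt : ∀ x, sqDist z x < sqDist z p → f p < f x) {α : ℝ} (hα : 0 < α)
    (hαp : n < α * sqDist z p / 2) :
    ∃ ε > 0, ∀ x, sqDist z p / 4 ≤ sqDist z x → sqDist z x ≤ sqDist z p →
      f p ≤ f x - ε * (Real.exp (-α * sqDist z x) - Real.exp (-α * sqDist z p)) := by
  set ρ := sqDist z p
  have hρ : 0 < ρ := pos_of_mul_pos_right (by linarith [n.cast_nonneg (α := ℝ)]) hα.le
  set A := sqDist z ⁻¹' Icc (ρ / 4) ρ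
  have hA : IsCompact A := (isCompact_sqDist_le z ρ).of_isClosed_subset
    (isClosed_Icc.preimage (continuous_sqDist z)) fun x hx => hx.2
  have hAΩ : A ⊆ Ω := fun x hx => hball hx.2
  have hS : IsCompact (sqDist z ⁻¹' {ρ / 4}) := hA.of_isClosed_subset
    (isClosed_singleton.preimage (continuous_sqDist z)) fun x (hx : _ = _) =>
      ⟨hx.ge, by rw [hx]; linarith⟩
  obtain ⟨ε, hε, hεS⟩ := hS.exists_pos_add_le
    (hf.continuousOn.mono fun x (hx : _ = _) => hball (show _ ≤ ρ by rw [hx]; linarith))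
    fun x (hx : _ = _) => hlt x (by rw [hx]; linarith)
  refine ⟨ε, hε, fun x hx₁ hx₂ => ?_⟩
  set w := fun y => Real.exp (-α * sqDist z y)
  have hw : ContDiff ℝ 2 w := by
    unfold w sqDist
    fun_prop
  have hwc (y) : ContDiffAt ℝ 2 (fun y => w y - w p) y := hw.contDiffAt.sub contDiffAt_const
  have hfc (y) (hy : y ∈ A) : ContDiffAt ℝ 2 f y := hf.contDiffAt (hΩ.mem_nhds (hAΩ hy))
  have hg₂ (y) (hy : y ∈ A) : ContDiffAt ℝ 2 (fun y => f y - ε * (w y - w p)) y :=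
    (hfc y hy).sub (contDiffAt_const.mul (hwc y))
  refine hA.le_of_laplacian_neg (g := fun y => f y - ε * (w y - w p))
    (fun y hy => (hg₂ y hy).continuousAt.continuousWithinAt)
    (fun y hy => hg₂ y (interior_subset hy)) (fun y hy => ?_) (fun y hy => ?_) x ⟨hx₁, hx₂⟩
  · have hyA := interior_subset hy
    have hwpos : 0 < laplacian w y :=
      laplacian_exp_neg_mul_sqDist_pos hα (by nlinarith [hyA.1])
    rw [laplacian_sub (hfc y hyA) (contDiffAt_const.mul (hwc y)), laplacian_const_mul (hwc y),
      laplacian_sub hw.contDiffAt contDiffAt_const, laplacian_const]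
    linarith [hΔ y (hAΩ hyA), mul_pos hε hwpos]
  · have hy' := (continuous_sqDist z).frontier_preimage_subset _ hy
    rw [frontier_Icc (by linarith)] at hy'
    rcases hy' with hy' | hy'
    · have hwy : w y ≤ 1 := Real.exp_le_one_iff.2 (by nlinarith [sqDist_nonneg z y])
      nlinarith [hεS y hy', Real.exp_pos (-α * ρ)]
    · have hwy : w y = w p := by simp only [w, ρ, show sqDist z y = ρ from hy']
      simpa [hwy] using hle y hy'.le

theorem hopf_lemma {z p : Fin n → ℝ} (hΩ : IsOpen Ω) (hf : ContDiffOn ℝ 2 f Ω)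
    (hΔ : ∀ x ∈ Ω, laplacian f x ≤ 0) (hpz : p ≠ z) (hball : {x | sqDist z x ≤ sqDist z p} ⊆ Ω)
    (hle : ∀ x, sqDist z x ≤ sqDist z p → f p ≤ f x)
    (hlt : ∀ x, sqDist z x < sqDist z p → f p < f x) :
    0 < fderiv ℝ f p (z - p) := by
  set ρ := sqDist z p with hρ_def
  have hρ : 0 < ρ := sqDist_pos_of_ne hpz
  set α := 2 * (n + 1) / ρ
  have hα : 0 < α := by positivity
  have hαρ : α * ρ = 2 * (n + 1) := div_mul_cancel₀ _ hρ.ne'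
  obtain ⟨ε, hε, hbarrier⟩ := exists_barrier_comparison hΩ hf hΔ hball hle hlt hα (by linarith)
  set w := fun y => Real.exp (-α * sqDist z y)
  set A := {x | ρ / 4 ≤ sqDist z x ∧ sqDist z x ≤ ρ}
  have hmin : IsMinOn (fun y => f y - ε * (w y - w p)) A p := fun x hx => by
    simpa [w] using hbarrier x hx.1 hx.2
  have hcone : z - p ∈ posTangentConeAt A p := by
    refine mem_posTangentConeAt_of_frequently_mem (Eventually.frequently ?_)
    filter_upwards [Ioo_mem_nhdsGT (by norm_num : (0 : ℝ) < 1 / 2)] with t ht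
    have h₁ : 1 / 4 ≤ (1 - t) ^ 2 := by nlinarith [ht.2]
    have h₂ : (1 - t) ^ 2 ≤ 1 := by nlinarith [ht.1, ht.2]
    show _ ≤ sqDist z _ ∧ sqDist z _ ≤ _
    rw [sqDist_add_smul_sub, ← hρ_def]
    constructor <;> nlinarith
  have hfd : HasFDerivAt f (fderiv ℝ f p) p :=
    ((hf.differentiableOn (by norm_num)).differentiableAt
      (hΩ.mem_nhds (hball (le_refl ρ)))).hasFDerivAt
  have hwd := (hasDerivAt_exp_neg_mul α (sqDist z p)).comp_hasFDerivAt p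
    (hasFDerivAt_sqDist z p).differentiableAt.hasFDerivAt
  have hgd := hfd.sub ((hwd.sub_const (w p)).const_mul ε)
  have key := hmin.localize.hasFDerivWithinAt_nonneg hgd.hasFDerivWithinAt hcone
  simp only [FunLike.coe_sub, FunLike.coe_smul, Pi.sub_apply, Pi.smul_apply,
    fderiv_sqDist_apply_sub, smul_eq_mul, ← hρ_def] at key
  nlinarith [mul_pos (mul_pos hε hα) (mul_pos (Real.exp_pos (-α * ρ)) hρ)]

end MinimumPrinciple

section StrongMinimumPrinciple

variable {n : ℕ} {Ω : Set (Fin n → ℝ)} {f : (Fin n → ℝ) → ℝ} {x₀ : Fin n → ℝ}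

theorem IsMinOn.eventually_eq_of_laplacian_nonpos (hmin : IsMinOn f Ω x₀) (hΩ : IsOpen Ω)
    (hf : ContDiffOn ℝ 2 f Ω) (hΔ : ∀ x ∈ Ω, laplacian f x ≤ 0) (hx₀ : x₀ ∈ Ω) :
    ∀ᶠ z in 𝓝 x₀, f z = f x₀ := by
  obtain ⟨R, hR, hRΩ⟩ := hΩ.exists_sqDist_lt_subset hx₀
  have hnear : ∀ᶠ z in 𝓝 x₀, sqDist x₀ z < R / 4 :=
    (continuous_sqDist x₀).continuousAt.eventually_lt continuousAt_const
      (by simp [sqDist, hR])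
  filter_upwards [hnear] with z hz
  by_contra hne
  -- a point `p` of the level set `{f = f x₀}` nearest to `z` bounds a ball on which `f > f p`
  have hBΩ (y) (hy : sqDist z y ≤ sqDist z x₀) : y ∈ Ω := hRΩ <| by
    have := sqDist_le_two_mul_add x₀ z y
    rw [sqDist_comm z x₀] at hy
    show sqDist x₀ y < R
    linarith
  have hC : IsCompact ({y | sqDist z y ≤ sqDist z x₀} ∩ f ⁻¹' {f x₀}) :=
    (isCompact_sqDist_le z _).of_isClosed_subset
      ((hf.continuousOn.mono hBΩ).preimage_isClosed_of_isClosed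
        (isClosed_le (continuous_sqDist z) continuous_const) isClosed_singleton)
      inter_subset_left
  obtain ⟨p, ⟨hpB : sqDist z p ≤ _, hfp : f p = f x₀⟩, hpmin⟩ :=
    hC.exists_isMinOn ⟨x₀, le_refl (sqDist z x₀), rfl⟩ (continuous_sqDist z).continuousOn
  have hball : {y | sqDist z y ≤ sqDist z p} ⊆ Ω := fun y hy => hBΩ y (le_trans hy hpB)
  have hminp : IsMinOn f Ω p := fun y hy => by
    simpa [hfp] using hmin hy
  have hle (y) (hy : sqDist z y ≤ sqDist z p) : f p ≤ f y := hminp (hball hy)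
  have hlt (y) (hy : sqDist z y < sqDist z p) : f p < f y :=
    (hle y hy.le).lt_of_ne fun h => (hpmin ⟨hy.le.trans hpB, by simp [← h, hfp]⟩).not_gt hy
  have hpz : p ≠ z := fun h => hne (h ▸ hfp)
  have hpos := hopf_lemma hΩ hf hΔ hpz hball hle hlt
  rw [(hminp.isLocalMin (hΩ.mem_nhds (hBΩ p hpB))).fderiv_eq_zero] at hpos
  exact hpos.ne rfl

theorem IsMinOn.eq_of_laplacian_nonpos (hmin : IsMinOn f Ω x₀) (hΩ : IsOpen Ω)
    (hconn : IsPreconnected Ω) (hf : ContDiffOn ℝ 2 f Ω) (hΔ : ∀ x ∈ Ω, laplacian f x ≤ 0)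
    (hx₀ : x₀ ∈ Ω) : ∀ x ∈ Ω, f x = f x₀ := by
  have hU : IsOpen {x | x ∈ Ω ∧ f x = f x₀} := isOpen_iff_mem_nhds.2 fun x ⟨hx, hfx⟩ => by
    have hminx : IsMinOn f Ω x := fun y hy => by simpa [hfx] using hmin hy
    filter_upwards [hΩ.mem_nhds hx, hminx.eventually_eq_of_laplacian_nonpos hΩ hf hΔ hx]
      with y hy hfy using ⟨hy, hfy.trans hfx⟩
  have hV : IsOpen (Ω ∩ f ⁻¹' {f x₀}ᶜ) :=
    hf.continuousOn.isOpen_inter_preimage hΩ isOpen_compl_singleton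
  have hsub := hconn.subset_left_of_subset_union hU hV
    (disjoint_left.2 fun x hx hx' => hx'.2 hx.2)
    (fun x hx => (em (f x = f x₀)).imp (fun h => ⟨hx, h⟩) (fun h => ⟨hx, h⟩)) ⟨x₀, hx₀, hx₀, rfl⟩
  exact fun x hx => (hsub hx).2

end StrongMinimumPrinciple

theorem Convex.exists_forall_closure_le_interior_lt {E : Type*} [TopologicalSpace E]
    [AddCommGroup E] [IsTopologicalAddGroup E] [Module ℝ E] [ContinuousSMul ℝ E] {K : Set E}
    (hK : Convex ℝ K) (hKi : (interior K).Nonempty) {c : E} (hc : c ∉ interior K) :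
    ∃ ℓ : StrongDual ℝ E, (∀ y ∈ closure K, ℓ y ≤ ℓ c) ∧ ∀ y ∈ interior K, ℓ y < ℓ c := by
  obtain ⟨ℓ, hℓ⟩ := geometric_hahn_banach_open_point hK.interior isOpen_interior hc
  refine ⟨ℓ, fun y hy => ?_, hℓ⟩
  rw [← hK.closure_interior_eq_closure_of_nonempty_interior hKi] at hy
  exact closure_minimal (fun a ha => (hℓ a ha).le) (isClosed_Iic.preimage ℓ.continuous) hy

theorem stmt4 {m n : ℕ} (K : Set (Fin m → ℝ)) (hK : Convex ℝ K)
    (Ω : Set (Fin n → ℝ)) (hΩ : IsOpen Ω) (hconn : IsConnected Ω)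
    (u : (Fin n → ℝ) → Fin m → ℝ)
    (hu : ∀ j, HarmonicOn (fun x => u x j) Ω)
    (hrange : ∀ x ∈ Ω, u x ∈ closure K)
    (x₀ : Fin n → ℝ) (hx₀ : x₀ ∈ Ω) (hfr : u x₀ ∈ frontier K) :
    ∀ x ∈ Ω, u x ∈ frontier K := by
  intro x hx
  refine ⟨hrange x hx, fun hint => ?_⟩
  obtain ⟨ℓ, hle, hlt⟩ := hK.exists_forall_closure_le_interior_lt ⟨_, hint⟩ hfr.2
  have hmin : IsMinOn (fun y => (-ℓ) (u y)) Ω x₀ := fun y hy => by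
    simpa using hle _ (hrange y hy)
  have hharm := HarmonicOn.clm_comp hu hΩ (-ℓ)
  have hconst := hmin.eq_of_laplacian_nonpos hΩ hconn.isPreconnected hharm.1
    (fun y hy => (hharm.2 y hy).le) hx₀ x hx
  exact (hlt _ hint).ne (by simpa using hconst)
end

section
/- Let ρ₀ > 0, s ∈ (0, ρ₀), set for η ∈ [ρ₀, ρ₀+2s] the function g(η) = ρ₀²(3 + 6s/ρ₀)·log(ρ₀/η) + 3ρ₀(η − ρ₀). Then g(ρ₀) = 0, g(η) ≤ 0 for all η ∈ [ρ₀, ρ₀+2s], and the radial Laplacian in ℝ², Δg = g''(η) + g'(η)/η, satisfies Δg ≥ 1 on [ρ₀, ρ₀+2s]; moreover |g'(ρ₀)| = 6s. -/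
/-!
The barrier is `C log(ρ₀/η) + a (η - ρ₀)` with `a = 3ρ₀` and `C = 3ρ₀² + 6sρ₀`. The logarithm is
harmonic in the plane, so the radial Laplacian only sees the linear part and equals `a/η ≥ 1` as long
as `η ≤ 3ρ₀`. The elementary bound `log x ≤ x - 1` reduces nonpositivity to `a η ≤ C`, and `C` is
chosen to make this hold up to `η = ρ₀ + 2s`; the same choice gives `g'(ρ₀) = a - C/ρ₀ = -6s`.
-/

open Real Topology

noncomputable def logBarrier (C a ρ η : ℝ) : ℝ := C * log (ρ / η) + a * (η - ρ)

namespace logBarrier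

variable {C a ρ η : ℝ}

theorem apply_self : logBarrier C a ρ ρ = 0 := by
  rcases eq_or_ne ρ 0 with rfl | hρ <;> simp [logBarrier, *]

theorem hasDerivAt (hρ : ρ ≠ 0) (hη : η ≠ 0) : HasDerivAt (logBarrier C a ρ) (a - C / η) η := by
  have hlog : HasDerivAt (fun x => C * (log ρ - log x) + a * (x - ρ)) (a - C / η) η :=
    ((((hasDerivAt_log hη).const_sub (log ρ)).const_mul C).add
      (((hasDerivAt_id η).sub_const ρ).const_mul a)).congr_deriv (by ring)
  refine hlog.congr_of_eventuallyEq ?_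
  filter_upwards [isOpen_ne.mem_nhds hη] with x hx
  rw [logBarrier, log_div hρ hx]

theorem deriv_eq (hρ : ρ ≠ 0) (hη : η ≠ 0) : deriv (logBarrier C a ρ) η = a - C / η :=
  (hasDerivAt hρ hη).deriv

theorem deriv_deriv_eq (hρ : ρ ≠ 0) (hη : η ≠ 0) :
    deriv (deriv (logBarrier C a ρ)) η = C / η ^ 2 := by
  have hderiv : deriv (logBarrier C a ρ) =ᶠ[𝓝 η] fun x => a - C * x⁻¹ := by
    filter_upwards [isOpen_ne.mem_nhds hη] with x hx
    rw [deriv_eq hρ hx, div_eq_mul_inv]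
  rw [hderiv.deriv_eq, (((hasDerivAt_inv hη).const_mul C).const_sub a).deriv]
  ring

theorem radialLaplacian_eq (hρ : ρ ≠ 0) (hη : η ≠ 0) :
    deriv (deriv (logBarrier C a ρ)) η + deriv (logBarrier C a ρ) η / η = a / η := by
  rw [deriv_deriv_eq hρ hη, deriv_eq hρ hη]
  field_simp
  ring

theorem nonpos (hρ : 0 < ρ) (hρη : ρ ≤ η) (hC : 0 ≤ C) (haC : a * η ≤ C) :
    logBarrier C a ρ η ≤ 0 := by
  have hη : 0 < η := hρ.trans_le hρη
  have hlog : C * log (ρ / η) ≤ C * (ρ / η - 1) :=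
    mul_le_mul_of_nonneg_left (log_le_sub_one_of_pos (div_pos hρ hη)) hC
  have hfactor : C * (ρ / η - 1) + a * (η - ρ) = (η - ρ) * (a * η - C) / η := by
    field_simp
    ring
  have hprod : (η - ρ) * (a * η - C) / η ≤ 0 :=
    div_nonpos_of_nonpos_of_nonneg
      (mul_nonpos_of_nonneg_of_nonpos (sub_nonneg.2 hρη) (sub_nonpos.2 haC)) hη.le
  unfold logBarrier
  linarith

end logBarrier

theorem stmt12_general (ρ₀ s : ℝ) (hs : s ∈ Set.Ioo 0 ρ₀)
    (g : ℝ → ℝ)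
    (hg : ∀ η, g η = ρ₀^2 * (3 + 6*s/ρ₀) * Real.log (ρ₀/η) + 3*ρ₀*(η - ρ₀)) :
    g ρ₀ = 0 ∧ (∀ η ∈ Set.Icc ρ₀ (ρ₀ + 2*s), g η ≤ 0) ∧
      (∀ η ∈ Set.Icc ρ₀ (ρ₀ + 2*s), 1 ≤ deriv (deriv g) η + deriv g η / η) ∧
      |deriv g ρ₀| = 6*s := by
  obtain ⟨hs0, hsρ⟩ := hs
  have hρ₀ : 0 < ρ₀ := hs0.trans hsρ
  have hC : ρ₀ ^ 2 * (3 + 6 * s / ρ₀) = 3 * ρ₀ ^ 2 + 6 * s * ρ₀ := by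
    field_simp
  obtain rfl : g = logBarrier (3 * ρ₀ ^ 2 + 6 * s * ρ₀) (3 * ρ₀) ρ₀ :=
    funext fun η => by rw [hg, hC, logBarrier]
  refine ⟨logBarrier.apply_self, fun η ⟨hη₁, hη₂⟩ => ?_, fun η ⟨hη₁, hη₂⟩ => ?_, ?_⟩
  · exact logBarrier.nonpos hρ₀ hη₁ (by positivity) (by nlinarith)
  · have hη : 0 < η := hρ₀.trans_le hη₁
    rw [logBarrier.radialLaplacian_eq hρ₀.ne' hη.ne', le_div_iff₀ hη]
    linarith
  · rw [logBarrier.deriv_eq hρ₀.ne' hρ₀.ne']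
    have hslope : 3 * ρ₀ - (3 * ρ₀ ^ 2 + 6 * s * ρ₀) / ρ₀ = -(6 * s) := by
      field_simp
      ring
    rw [hslope, abs_neg, abs_of_pos (by positivity)]

theorem stmt12 (ρ₀ s : ℝ) (hρ₀ : 0 < ρ₀) (hs : s ∈ Set.Ioo 0 ρ₀)
    (g : ℝ → ℝ)
    (hg : ∀ η, g η = ρ₀^2 * (3 + 6*s/ρ₀) * Real.log (ρ₀/η) + 3*ρ₀*(η - ρ₀)) :
    g ρ₀ = 0 ∧ (∀ η ∈ Set.Icc ρ₀ (ρ₀ + 2*s), g η ≤ 0) ∧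
      (∀ η ∈ Set.Icc ρ₀ (ρ₀ + 2*s), 1 ≤ deriv (deriv g) η + deriv g η / η) ∧
      |deriv g ρ₀| = 6*s :=
  stmt12_general ρ₀ s hs g hg
end

section
/- Let γ : [0, r₁] → ℝ be absolutely continuous, nonnegative, and nondecreasing, and suppose there exist constants M, M' ≥ 0 and θ = 3/4 such that −M r^{3θ} ≤ −γ(r) + (r/2 + M' r^{1+θ}) γ'(r) for almost every 0 < r ≤ r₁. Then there is a constant C = C(M, M', r₁, γ(r₁)) such that γ(r) ≤ C r² for all 0 < r ≤ r₁. -/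
/-!
The integrating factor `μ(r) = 2r⁻³(1 + 2M' r^θ)^{2/θ - 1}` turns the inequality into
`-M μ(r) r^{3θ} ≤ (γ w)'`, where `w(r) = r⁻²(1 + 2M' r^θ)^{2/θ}` satisfies `w' = -μ` and
`w = μ · (r/2 + M' r^{1+θ})`. Since `γ` is absolutely continuous, integrating from `r` to `r₁`
gives `γ(r) w(r) ≤ γ(r₁) w(r₁) + M ∫₀^{r₁} μ(t) t^{3θ} dt`; the integrand is of order `t^{3θ-3}`,
integrable for `θ > 2/3`, and `w(r) ≥ r⁻²` then yields `γ(r) ≤ C r²`.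
-/

open MeasureTheory Set Real

theorem AbsolutelyContinuousOnInterval.integral_le_mul_sub_mul {f w h : ℝ → ℝ} {a b : ℝ}
    (hab : a ≤ b) (hf : AbsolutelyContinuousOnInterval f a b)
    (hw : AbsolutelyContinuousOnInterval w a b) (hh : IntervalIntegrable h volume a b)
    (hle : h ≤ᵐ[volume.restrict (Ioc a b)] fun x ↦ deriv f x * w x + f x * deriv w x) :
    ∫ x in a..b, h x ≤ f b * w b - f a * w a := by
  rw [← hf.integral_deriv_mul_eq_sub hw, intervalIntegral.integral_of_le hab,
    intervalIntegral.integral_of_le hab]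
  refine setIntegral_mono_ae_restrict hh.1 ?_ hle
  exact ((hf.intervalIntegrable_deriv.mul_continuousOn hw.continuousOn).add
    (hw.intervalIntegrable_deriv.continuousOn_mul hf.continuousOn)).1

namespace QuadraticGrowth

noncomputable def weight (θ b x : ℝ) : ℝ := x ^ (-2 : ℝ) * (1 + 2 * b * x ^ θ) ^ (2 / θ)

noncomputable def integratingFactor (θ b x : ℝ) : ℝ :=
  2 * x ^ (-3 : ℝ) * (1 + 2 * b * x ^ θ) ^ (2 / θ - 1)

section
variable {θ b M x y z : ℝ}

lemma integratingFactor_nonneg (hb : 0 ≤ b) (hx : 0 ≤ x) : 0 ≤ integratingFactor θ b x := by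
  have : 0 < 1 + 2 * b * x ^ θ := by positivity
  unfold integratingFactor
  positivity

lemma weight_eq_integratingFactor_mul (hb : 0 ≤ b) (hx : 0 < x) :
    weight θ b x = integratingFactor θ b x * (x / 2 + b * x ^ (1 + θ)) := by
  have hp : 0 < 1 + 2 * b * x ^ θ := by positivity
  rw [weight, integratingFactor, rpow_sub_one hp.ne', rpow_add hx, rpow_one,
    show (-2 : ℝ) = -3 + 1 by norm_num, rpow_add hx, rpow_one]
  field_simp

lemma hasDerivAt_weight (hθ : θ ≠ 0) (hb : 0 ≤ b) (hx : 0 < x) :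
    HasDerivAt (weight θ b) (-integratingFactor θ b x) x := by
  have hp : 0 < 1 + 2 * b * x ^ θ := by positivity
  have := (hasDerivAt_rpow_const (p := -2) (Or.inl hx.ne')).fun_mul
    ((((hasDerivAt_rpow_const (p := θ) (Or.inl hx.ne')).const_mul (2 * b)).const_add 1).rpow_const
      (p := 2 / θ) (Or.inl hp.ne'))
  refine this.congr_deriv ?_
  have h2 : x ^ (-2 : ℝ) = x ^ (-3 : ℝ) * x := by rw [← rpow_add_one hx.ne']; norm_num
  rw [integratingFactor, show (-2 : ℝ) - 1 = -3 by norm_num, rpow_sub_one hx.ne' θ,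
    rpow_sub_one hp.ne', h2]
  field_simp
  ring

lemma contDiffOn_weight (hb : 0 ≤ b) : ContDiffOn ℝ 1 (weight θ b) (Ioi 0) := by
  intro x (hx : 0 < x)
  have hp : 0 < 1 + 2 * b * x ^ θ := by positivity
  exact ((contDiffAt_rpow_const_of_ne hx.ne').mul ((contDiffAt_const.add (contDiffAt_const.mul
    (contDiffAt_rpow_const_of_ne hx.ne'))).rpow_const_of_ne hp.ne')).contDiffWithinAt

lemma continuousAt_integratingFactor (hb : 0 ≤ b) (hx : 0 < x) :
    ContinuousAt (integratingFactor θ b) x := by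
  have hp : 0 < 1 + 2 * b * x ^ θ := by positivity
  exact (continuousAt_const.mul (continuousAt_rpow_const _ _ (Or.inl hx.ne'))).mul
    ((continuousAt_const.add (continuousAt_const.mul
      (continuousAt_rpow_const _ _ (Or.inl hx.ne')))).rpow_const (Or.inl hp.ne'))

lemma rpow_neg_two_le_weight (hθ : 0 ≤ θ) (hb : 0 ≤ b) (hx : 0 ≤ x) :
    x ^ (-2 : ℝ) ≤ weight θ b x := by
  have h1 : 1 ≤ 1 + 2 * b * x ^ θ := by have := rpow_nonneg hx θ; nlinarith
  exact le_mul_of_one_le_right (rpow_nonneg hx _) (one_le_rpow h1 (by positivity))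

lemma neg_mul_integratingFactor_mul_rpow_le (hb : 0 ≤ b) (hx : 0 < x)
    (h : -M * x ^ (3 * θ) ≤ -y + (x / 2 + b * x ^ (1 + θ)) * z) :
    -(M * (integratingFactor θ b x * x ^ (3 * θ))) ≤
      z * weight θ b x + y * -integratingFactor θ b x := by
  have hμ := integratingFactor_nonneg (θ := θ) hb hx.le
  rw [weight_eq_integratingFactor_mul hb hx]
  linear_combination mul_le_mul_of_nonneg_left h hμ

lemma intervalIntegrable_integratingFactor_mul_rpow (hθ : 2 / 3 < θ) (hb : 0 ≤ b) {r : ℝ}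
    (hr : 0 ≤ r) :
    IntervalIntegrable (fun t ↦ integratingFactor θ b t * t ^ (3 * θ)) volume 0 r := by
  have hEq : EqOn (fun t ↦ 2 * (1 + 2 * b * t ^ θ) ^ (2 / θ - 1) * t ^ (3 * θ - 3))
      (fun t ↦ integratingFactor θ b t * t ^ (3 * θ)) (uIoc 0 r) := by
    intro t ht
    rw [uIoc_of_le hr] at ht
    simp only [integratingFactor, rpow_sub ht.1]
    rw [rpow_neg ht.1.le, show (3 : ℝ) = ((3 : ℕ) : ℝ) by norm_num, rpow_natCast]
    field_simp
  refine (intervalIntegrable_congr hEq).mp (IntervalIntegrable.continuousOn_mul ?_ ?_)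
  · exact intervalIntegral.intervalIntegrable_rpow' (by linarith)
  · rw [uIcc_of_le hr]
    intro t ht
    have hp : 0 < 1 + 2 * b * t ^ θ := by have := ht.1; positivity
    exact continuousWithinAt_const.mul ((continuousWithinAt_const.add
      (continuousWithinAt_const.mul (continuousWithinAt_id.rpow_const
        (Or.inr (by linarith))))).rpow_const (Or.inl hp.ne'))

end

section
variable {θ r₁ M M' : ℝ} {γ g : ℝ → ℝ}

theorem mul_weight_le_add_integral (hθ : θ ≠ 0) (hint : IntervalIntegrable g volume 0 r₁)
    (hAC : ∀ x ∈ Icc 0 r₁, γ x = γ 0 + ∫ t in 0..x, g t) (hM' : 0 ≤ M')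
    (hineq : ∀ᵐ r ∂(volume.restrict (Ioc 0 r₁)),
      -M * r ^ (3 * θ) ≤ -γ r + (r / 2 + M' * r ^ (1 + θ)) * g r)
    {a : ℝ} (ha : 0 < a) (har : a ≤ r₁) :
    γ a * weight θ M' a ≤
      γ r₁ * weight θ M' r₁ + ∫ t in a..r₁, M * (integratingFactor θ M' t * t ^ (3 * θ)) := by
  set f : ℝ → ℝ := fun x ↦ γ 0 + ∫ t in 0..x, g t
  have hpos : ∀ t ∈ uIcc a r₁, 0 < t := fun t ht ↦ ha.trans_le (uIcc_of_le har ▸ ht).1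
  have hsub : uIcc a r₁ ⊆ uIcc 0 r₁ :=
    uIcc_subset_uIcc (mem_uIcc_of_le ha.le har) right_mem_uIcc
  have hf : AbsolutelyContinuousOnInterval f a r₁ :=
    (contDiffOn_const.absolutelyContinuousOnInterval.fun_add
      (hint.absolutelyContinuousOnInterval_intervalIntegral left_mem_uIcc)).mono hsub
  have hw : AbsolutelyContinuousOnInterval (weight θ M') a r₁ :=
    ((contDiffOn_weight hM').mono hpos).absolutelyContinuousOnInterval
  have hint_factor : IntervalIntegrable (fun t ↦ M * (integratingFactor θ M' t * t ^ (3 * θ)))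
      volume a r₁ :=
    ContinuousOn.intervalIntegrable fun t ht ↦ ((continuousAt_integratingFactor hM'
      (hpos t ht)).mul (continuousAt_rpow_const _ _
        (Or.inl (hpos t ht).ne'))).const_mul M |>.continuousWithinAt
  have hf_deriv : ∀ᵐ t, t ∈ uIcc 0 r₁ → HasDerivAt f (g t) t := by
    filter_upwards [hint.ae_hasDerivAt_integral] with t ht htm
    exact (ht htm 0 left_mem_uIcc).const_add _
  have key := hf.integral_le_mul_sub_mul har hw hint_factor.neg ?_
  · simp only [Pi.neg_apply, intervalIntegral.integral_neg] at key
    rw [show f a = γ a from (hAC a ⟨ha.le, har⟩).symm,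
      show f r₁ = γ r₁ from (hAC r₁ ⟨ha.le.trans har, le_rfl⟩).symm] at key
    linarith
  · filter_upwards [ae_restrict_of_ae_restrict_of_subset (Ioc_subset_Ioc_left ha.le) hineq,
      ae_restrict_of_ae hf_deriv, ae_restrict_mem measurableSet_Ioc] with t hineq_t hf_t ht
    have ht0 : 0 < t := ha.trans ht.1
    have htr : t ∈ Icc 0 r₁ := ⟨ht0.le, ht.2⟩
    rw [Pi.neg_apply, (hf_t (Icc_subset_uIcc htr)).deriv, (hasDerivAt_weight hθ hM' ht0).deriv,
      show f t = γ t from (hAC t htr).symm]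
    exact neg_mul_integratingFactor_mul_rpow_le hM' ht0 hineq_t

end

theorem exists_le_mul_sq_of_ae_ode_ineq {θ r₁ M M' : ℝ} {γ g : ℝ → ℝ} (hθ : 2 / 3 < θ)
    (hint : IntervalIntegrable g volume 0 r₁)
    (hAC : ∀ x ∈ Icc 0 r₁, γ x = γ 0 + ∫ t in 0..x, g t)
    (hnn : ∀ x ∈ Icc 0 r₁, 0 ≤ γ x) (hM : 0 ≤ M) (hM' : 0 ≤ M')
    (hineq : ∀ᵐ r ∂(volume.restrict (Ioc 0 r₁)),
      -M * r ^ (3 * θ) ≤ -γ r + (r / 2 + M' * r ^ (1 + θ)) * g r) :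
    ∃ C : ℝ, ∀ r ∈ Ioc 0 r₁, γ r ≤ C * r ^ 2 := by
  set h : ℝ → ℝ := fun t ↦ M * (integratingFactor θ M' t * t ^ (3 * θ))
  refine ⟨γ r₁ * weight θ M' r₁ + ∫ t in 0..r₁, h t, ?_⟩
  rintro a ⟨ha, har⟩
  have hr₁ : 0 ≤ r₁ := ha.le.trans har
  have htail : ∫ t in a..r₁, h t ≤ ∫ t in 0..r₁, h t := by
    refine intervalIntegral.integral_mono_interval ha.le har le_rfl ?_
      ((intervalIntegrable_integratingFactor_mul_rpow hθ hM' hr₁).const_mul M)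
    filter_upwards [ae_restrict_mem measurableSet_Ioc] with t ht
    exact mul_nonneg hM (mul_nonneg (integratingFactor_nonneg hM' ht.1.le) (rpow_nonneg ht.1.le _))
  have hγa : 0 ≤ γ a := hnn a ⟨ha.le, har⟩
  have ha2 : a ^ (-2 : ℝ) * a ^ 2 = 1 := by
    rw [rpow_neg ha.le, rpow_two, inv_mul_cancel₀ (by positivity)]
  calc γ a = γ a * a ^ (-2 : ℝ) * a ^ 2 := by rw [mul_assoc, ha2, mul_one]
    _ ≤ γ a * weight θ M' a * a ^ 2 := by
      gcongr; exact rpow_neg_two_le_weight (by linarith) hM' ha.le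
    _ ≤ (γ r₁ * weight θ M' r₁ + ∫ t in a..r₁, h t) * a ^ 2 := by
      gcongr; exact mul_weight_le_add_integral (by linarith) hint hAC hM' hineq ha har
    _ ≤ (γ r₁ * weight θ M' r₁ + ∫ t in 0..r₁, h t) * a ^ 2 := by gcongr

end QuadraticGrowth

theorem stmt13_general (r₁ : ℝ) (γ g : ℝ → ℝ)
    (hint : IntervalIntegrable g volume 0 r₁)
    (hAC : ∀ x ∈ Set.Icc (0:ℝ) r₁, γ x = γ 0 + ∫ t in (0:ℝ)..x, g t)
    (hnn : ∀ x ∈ Set.Icc (0:ℝ) r₁, 0 ≤ γ x)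
    (M M' : ℝ) (hM : 0 ≤ M) (hM' : 0 ≤ M')
    (hineq : ∀ᵐ r ∂(volume.restrict (Set.Ioc (0:ℝ) r₁)),
      -M * r ^ ((9:ℝ)/4) ≤ -γ r + (r/2 + M' * r ^ ((7:ℝ)/4)) * g r) :
    ∃ C : ℝ, ∀ r ∈ Set.Ioc (0:ℝ) r₁, γ r ≤ C * r^2 := by
  rw [show (9 : ℝ) / 4 = 3 * (3 / 4) by norm_num, show (7 : ℝ) / 4 = 1 + 3 / 4 by norm_num]
    at hineq
  exact QuadraticGrowth.exists_le_mul_sq_of_ae_ode_ineq (θ := 3 / 4) (by norm_num)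
    hint hAC hnn hM hM' hineq

theorem stmt13 (r₁ : ℝ) (hr₁ : 0 < r₁) (γ g : ℝ → ℝ)
    (hint : IntervalIntegrable g volume 0 r₁)
    (hAC : ∀ x ∈ Set.Icc (0:ℝ) r₁, γ x = γ 0 + ∫ t in (0:ℝ)..x, g t)
    (hnn : ∀ x ∈ Set.Icc (0:ℝ) r₁, 0 ≤ γ x)
    (hmono : MonotoneOn γ (Set.Icc 0 r₁))
    (M M' : ℝ) (hM : 0 ≤ M) (hM' : 0 ≤ M')
    (hineq : ∀ᵐ r ∂(volume.restrict (Set.Ioc (0:ℝ) r₁)),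
      -M * r ^ ((9:ℝ)/4) ≤ -γ r + (r/2 + M' * r ^ ((7:ℝ)/4)) * g r) :
    ∃ C : ℝ, ∀ r ∈ Set.Ioc (0:ℝ) r₁, γ r ≤ C * r^2 :=
  stmt13_general r₁ γ g hint hAC hnn M M' hM hM' hineq
end

section
/- Let γ : (0, r] → ℝ be absolutely continuous, nonnegative, and nondecreasing, and suppose there exist constants M ≥ 0, δ ∈ (0,1), and m ∈ (0,2) with min(3δ, m) > η for some η > 0, such that −M(s^{3δ} + s²) ≤ −γ(s) + (s/m) γ'(s) for almost every 0 < s ≤ r. Then there exists a constant C (depending on M, δ, η, m, r, γ(r)) such that γ(s) ≤ C s^η for all 0 < s ≤ r. -/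
open MeasureTheory

/-!
Monotonicity gives `γ t ≥ γ a` on `[a, b]`, so integrating `g t ≥ (m / t) (γ t - K t^μ)` (where
`μ = min (3δ) 2` absorbs both error terms) yields `(1 + m log (b / a)) γ a ≤ γ b + (m K / μ) b^μ`.
Since `η < m`, some `l > 1` has `l^η ≤ 1 + m log l`, and then `γ s / s^η` exceeds
`γ (l s) / (l s)^η` by at most `(m K / μ) (l s)^(μ - η)`. Iterating up to scale `r` the errors form
a geometric series, so `γ s / s^η` stays bounded.
-/

theorem mul_log_sub_mul_rpow_le_integral {g : ℝ → ℝ} {a b c d μ : ℝ} (ha : 0 < a) (hab : a ≤ b)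
    (hμ : μ ≠ 0) (hg : IntervalIntegrable g volume a b)
    (hle : ∀ᵐ t ∂volume.restrict (Set.Icc a b), c * (1 / t) - d * t ^ (μ - 1) ≤ g t) :
    c * Real.log (b / a) - d * ((b ^ μ - a ^ μ) / μ) ≤ ∫ t in a..b, g t := by
  have h0 : (0 : ℝ) ∉ Set.uIcc a b := by
    rw [Set.uIcc_of_le hab]
    exact fun h => ha.not_ge h.1
  have hinv : IntervalIntegrable (fun t : ℝ => c * (1 / t)) volume a b :=
    (intervalIntegral.intervalIntegrable_one_div (fun t ht h => h0 (h ▸ ht))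
      continuousOn_id).const_mul c
  have hpow : IntervalIntegrable (fun t : ℝ => d * t ^ (μ - 1)) volume a b :=
    (intervalIntegral.intervalIntegrable_rpow (Or.inr h0)).const_mul d
  have hμ' : μ - 1 ≠ -1 := fun h => hμ (by linarith)
  calc c * Real.log (b / a) - d * ((b ^ μ - a ^ μ) / μ)
      = ∫ t in a..b, (c * (1 / t) - d * t ^ (μ - 1)) := by
        rw [intervalIntegral.integral_sub hinv hpow, intervalIntegral.integral_const_mul,
          intervalIntegral.integral_const_mul, integral_one_div h0,
          integral_rpow (Or.inr ⟨hμ', h0⟩), sub_add_cancel]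
    _ ≤ ∫ t in a..b, g t := intervalIntegral.integral_mono_ae_restrict hab (hinv.sub hpow) hg hle

theorem one_add_mul_log_mul_le_add_rpow {γ g : ℝ → ℝ} {r m K μ a b : ℝ}
    (hint : IntervalIntegrable g volume 0 r)
    (hAC : ∀ x ∈ Set.Icc (0 : ℝ) r, γ x = γ 0 + ∫ t in (0 : ℝ)..x, g t)
    (hmono : MonotoneOn γ (Set.Ioc 0 r)) (hm : 0 < m) (hK : 0 ≤ K) (hμ : 0 < μ)
    (hineq : ∀ᵐ s ∂volume.restrict (Set.Ioc (0 : ℝ) r), γ s - K * s ^ μ ≤ (s / m) * g s)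
    (ha : 0 < a) (hab : a ≤ b) (hbr : b ≤ r) :
    (1 + m * Real.log (b / a)) * γ a ≤ γ b + m * K / μ * b ^ μ := by
  have hsub : Set.Icc a b ⊆ Set.Ioc 0 r := fun t ht => ⟨ha.trans_le ht.1, ht.2.trans hbr⟩
  have hmem : ∀ x ∈ Set.Icc a b, x ∈ Set.uIcc 0 r := fun x hx =>
    Set.Icc_subset_uIcc (Set.Ioc_subset_Icc_self (hsub hx))
  have hint_to : ∀ x ∈ Set.Icc a b, IntervalIntegrable g volume 0 x := fun x hx =>
    hint.mono_set (Set.uIcc_subset_uIcc_left (hmem x hx))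
  have hincr : γ b - γ a = ∫ t in a..b, g t := by
    rw [hAC a (Set.Ioc_subset_Icc_self (hsub ⟨le_rfl, hab⟩)),
      hAC b (Set.Ioc_subset_Icc_self (hsub ⟨hab, le_rfl⟩)), add_sub_add_left_eq_sub,
      intervalIntegral.integral_interval_sub_left (hint_to b ⟨hab, le_rfl⟩)
        (hint_to a ⟨le_rfl, hab⟩)]
  have hle : ∀ᵐ t ∂volume.restrict (Set.Icc a b),
      m * γ a * (1 / t) - m * K * t ^ (μ - 1) ≤ g t := by
    filter_upwards [ae_restrict_of_ae_restrict_of_subset hsub hineq,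
      ae_restrict_mem measurableSet_Icc] with t ht htab
    have ht0 : 0 < t := ha.trans_le htab.1
    have hγ : γ a ≤ γ t := hmono (hsub ⟨le_rfl, hab⟩) (hsub htab) htab.1
    calc m * γ a * (1 / t) - m * K * t ^ (μ - 1) = (m / t) * (γ a - K * t ^ μ) := by
          rw [Real.rpow_sub_one ht0.ne']; field_simp
      _ ≤ (m / t) * ((t / m) * g t) := by gcongr; linarith
      _ = g t := by field_simp
  have hlog := mul_log_sub_mul_rpow_le_integral ha hab hμ.ne'
    
    (hint.mono_set (Set.uIcc_subset_uIcc (hmem a ⟨le_rfl, hab⟩) (hmem b ⟨hab, le_rfl⟩))) hle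
  have ha_err : 0 ≤ m * K * a ^ μ / μ := by positivity
  rw [← hincr] at hlog
  linear_combination hlog + ha_err

theorem exists_one_lt_rpow_le_one_add_mul_log {η m : ℝ} (hη : 0 < η) (hηm : η < m) :
    ∃ l : ℝ, 1 < l ∧ l ^ η ≤ 1 + m * Real.log l := by
  have hm : 0 < m := hη.trans hηm
  have hηm_div : η / m < 1 := (div_lt_one hm).2 hηm
  refine ⟨Real.exp (1 / η - 1 / m),
    Real.one_lt_exp_iff.2 (sub_pos.2 (one_div_lt_one_div_of_lt hη hηm)), ?_⟩
  rw [Real.log_exp, ← Real.exp_mul]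
  calc Real.exp ((1 / η - 1 / m) * η) = Real.exp (1 - η / m) := by field_simp
    _ ≤ 1 / (1 - (1 - η / m)) :=
        Real.exp_bound_div_one_sub_of_interval (by linarith) (by linarith [div_pos hη hm])
    _ = 1 + m * (1 / η - 1 / m) := by rw [sub_sub_cancel]; field_simp; ring

theorem rpow_le_rpow_sub_mul_rpow {t r μ p : ℝ} (ht : 0 < t) (htr : t ≤ r) (hμp : μ ≤ p) :
    t ^ p ≤ r ^ (p - μ) * t ^ μ := by
  calc t ^ p = t ^ (p - μ) * t ^ μ := by rw [← Real.rpow_add ht, sub_add_cancel]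
    _ ≤ r ^ (p - μ) * t ^ μ := by gcongr

theorem le_add_mul_rpow_of_le_comp_mul_add_rpow {h : ℝ → ℝ} {r l ν D K : ℝ} (hl : 1 < l)
    (hν : 0 < ν) (hD : 0 ≤ D) (hbase : ∀ s ∈ Set.Ioc 0 r, r < l * s → h s ≤ K)
    (hstep : ∀ a, 0 < a → l * a ≤ r → h a ≤ h (l * a) + D * (l * a) ^ ν) :
    ∀ s ∈ Set.Ioc 0 r, h s ≤ K + D * l ^ ν / (l ^ ν - 1) * r ^ ν := by
  have hlν : 1 < l ^ ν := Real.one_lt_rpow hl hν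
  set B := D * l ^ ν / (l ^ ν - 1) with hB
  have hB0 : 0 ≤ B := div_nonneg (by positivity) (by linarith)
  -- The invariant `h s ≤ K + B r^ν - B s^ν` survives a step because of this identity.
  have hBD : ∀ s, 0 < s → B * s ^ ν = B * (l * s) ^ ν - D * (l * s) ^ ν := by
    intro s hs
    have : l ^ ν - 1 ≠ 0 := by linarith
    rw [Real.mul_rpow (by linarith) hs.le, hB]
    field_simp
    ring
  have key : ∀ n : ℕ, ∀ s ∈ Set.Ioc 0 r, r < l ^ n * s → h s ≤ K + B * r ^ ν - B * s ^ ν := by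
    intro n
    induction n with
    | zero => rintro s ⟨-, hsr⟩ h; simp at h; linarith
    | succ n ih =>
      rintro s ⟨hs, hsr⟩ hn
      have hsν : B * s ^ ν ≤ B * r ^ ν := by gcongr
      rcases le_or_gt (l * s) r with hls | hls
      · have hls0 : 0 < l * s := by positivity
        have := ih (l * s) ⟨hls0, hls⟩ (by rwa [← mul_assoc, ← pow_succ])
        linarith [hstep s hs hls, hBD s hs]
      · linarith [hbase s ⟨hs, hsr⟩ hls]
  rintro s ⟨hs, hsr⟩
  obtain ⟨n, hn⟩ := pow_unbounded_of_one_lt (r / s) hl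
  have := key n s ⟨hs, hsr⟩ (by rwa [div_lt_iff₀ hs] at hn)
  have : 0 ≤ B * s ^ ν := by positivity
  linarith

theorem exists_le_mul_rpow_of_rpow_mul_le_comp_mul_add_rpow {f : ℝ → ℝ} {r l η μ D : ℝ}
    (hr : 0 < r) (hl : 1 < l) (hη : 0 ≤ η) (hημ : η < μ) (hD : 0 ≤ D)
    (hnn : ∀ s ∈ Set.Ioc 0 r, 0 ≤ f s) (hmono : MonotoneOn f (Set.Ioc 0 r))
    (hstep : ∀ a, 0 < a → l * a ≤ r → l ^ η * f a ≤ f (l * a) + D * (l * a) ^ μ) :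
    ∃ C, ∀ s ∈ Set.Ioc 0 r, f s ≤ C * s ^ η := by
  have hl0 : 0 < l := by linarith
  have hbase : ∀ s ∈ Set.Ioc 0 r, r < l * s → f s / s ^ η ≤ f r / (r / l) ^ η := by
    rintro s ⟨hs, hsr⟩ hrs
    have hrl : r / l ≤ s := by rw [div_le_iff₀' hl0]; exact hrs.le
    have : 0 ≤ f r := hnn r ⟨hr, le_rfl⟩
    gcongr
    exact hmono ⟨hs, hsr⟩ ⟨hr, le_rfl⟩ hsr
  have hstep' : ∀ a, 0 < a → l * a ≤ r →
      f a / a ^ η ≤ f (l * a) / (l * a) ^ η + D * (l * a) ^ (μ - η) := by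
    intro a ha hla
    have hla0 : 0 < l * a := by positivity
    calc f a / a ^ η = l ^ η * f a / (l * a) ^ η := by
          rw [Real.mul_rpow hl0.le ha.le]; field_simp
      _ ≤ (f (l * a) + D * (l * a) ^ μ) / (l * a) ^ η := by gcongr; exact hstep a ha hla
      _ = f (l * a) / (l * a) ^ η + D * (l * a) ^ (μ - η) := by rw [Real.rpow_sub hla0]; ring
  have hbound := le_add_mul_rpow_of_le_comp_mul_add_rpow hl (sub_pos.2 hημ) hD hbase hstep'
  exact ⟨_, fun s hs => (div_le_iff₀ (Real.rpow_pos_of_pos hs.1 η)).1 (hbound s hs)⟩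

theorem stmt14_general (r : ℝ) (hr : 0 < r) (γ g : ℝ → ℝ)
    (hint : IntervalIntegrable g volume 0 r)
    (hAC : ∀ x ∈ Set.Icc (0:ℝ) r, γ x = γ 0 + ∫ t in (0:ℝ)..x, g t)
    (hnn : ∀ x ∈ Set.Ioc (0:ℝ) r, 0 ≤ γ x)
    (hmono : MonotoneOn γ (Set.Ioc 0 r))
    (M δ m η : ℝ) (hM : 0 ≤ M)
    (hm : m ∈ Set.Ioo (0:ℝ) 2) (hη : 0 < η) (hηmin : η < min (3*δ) m)
    (hineq : ∀ᵐ s ∂(volume.restrict (Set.Ioc (0:ℝ) r)),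
      -M * (s ^ (3*δ) + s^2) ≤ -γ s + (s/m) * g s) :
    ∃ C : ℝ, ∀ s ∈ Set.Ioc (0:ℝ) r, γ s ≤ C * s ^ η := by
  obtain ⟨hm0, hm2⟩ := hm
  have hηm : η < m := hηmin.trans_le (min_le_right _ _)
  set μ := min (3 * δ) 2
  have hημ : η < μ := lt_min (hηmin.trans_le (min_le_left _ _)) (hηm.trans hm2)
  have hμ : 0 < μ := hη.trans hημ
  set K := M * (r ^ (3 * δ - μ) + r ^ ((2 : ℝ) - μ))
  have hK : 0 ≤ K := by positivity
  have hineq' : ∀ᵐ s ∂volume.restrict (Set.Ioc (0 : ℝ) r), γ s - K * s ^ μ ≤ (s / m) * g s := by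
    filter_upwards [hineq, ae_restrict_mem measurableSet_Ioc] with s hs ⟨hs0, hsr⟩
    have h3δ := rpow_le_rpow_sub_mul_rpow hs0 hsr (min_le_left (3 * δ) 2)
    have h2 := rpow_le_rpow_sub_mul_rpow hs0 hsr (min_le_right (3 * δ) 2)
    rw [Real.rpow_two] at h2
    have := mul_le_mul_of_nonneg_left (add_le_add h3δ h2) hM
    linarith
  obtain ⟨l, hl, hlη⟩ := exists_one_lt_rpow_le_one_add_mul_log hη hηm
  refine exists_le_mul_rpow_of_rpow_mul_le_comp_mul_add_rpow hr hl hη.le hημ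
    (D := m * K / μ) (by positivity) hnn hmono fun a ha hla => ?_
  have hal : a ≤ l * a := le_mul_of_one_le_left ha.le hl.le
  have hγ := one_add_mul_log_mul_le_add_rpow hint hAC hmono hm0 hK hμ
    hineq' ha hal hla
  rw [mul_div_cancel_right₀ l ha.ne'] at hγ
  calc l ^ η * γ a ≤ (1 + m * Real.log l) * γ a := by gcongr; exact hnn a ⟨ha, hal.trans hla⟩
    _ ≤ _ := hγ

theorem stmt14 (r : ℝ) (hr : 0 < r) (γ g : ℝ → ℝ)
    (hint : IntervalIntegrable g volume 0 r)
    (hAC : ∀ x ∈ Set.Icc (0:ℝ) r, γ x = γ 0 + ∫ t in (0:ℝ)..x, g t)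
    (hnn : ∀ x ∈ Set.Ioc (0:ℝ) r, 0 ≤ γ x)
    (hmono : MonotoneOn γ (Set.Ioc 0 r))
    (M δ m η : ℝ) (hM : 0 ≤ M) (hδ : δ ∈ Set.Ioo (0:ℝ) 1)
    (hm : m ∈ Set.Ioo (0:ℝ) 2) (hη : 0 < η) (hηmin : η < min (3*δ) m)
    (hineq : ∀ᵐ s ∂(volume.restrict (Set.Ioc (0:ℝ) r)),
      -M * (s ^ (3*δ) + s^2) ≤ -γ s + (s/m) * g s) :
    ∃ C : ℝ, ∀ s ∈ Set.Ioc (0:ℝ) r, γ s ≤ C * s ^ η :=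
  stmt14_general r hr γ g hint hAC hnn hmono M δ m η hM hm hη hηmin hineq
end
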